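/- arXiv:2603.01909 — 7 statements merged into one kernel-verified Lean document; each statement's English description precedes it below -/
import Mathlib

section
/- For every even convex C^1 function φ: ℝ → ℝ with φ(0) = 0, φ'(0) = 0, and φ' concave on [0,∞), the function x ↦ φ(x)/x² is nonincreasing on (0,∞). -/
theorem phi_div_sq_antitone (φ : ℝ → ℝ)
    (heven : ∀ x : ℝ, φ (-x) = φ x)
    (hconv : ConvexOn ℝ Set.univ φ)
    (hC1 : ContDiff ℝ 1 φ)
    (h0 : φ 0 = 0)
    (h0' : deriv φ 0 = 0)
    (hconc : ConcaveOn ℝ (Set.Ici 0) (deriv φ)) :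
    AntitoneOn (fun x => φ x / x ^ 2) (Set.Ioi (0 : ℝ)) := by
  have hdiff : Differentiable ℝ φ := hC1.differentiable one_ne_zero
  have hdc : Continuous (deriv φ) := hC1.continuous_deriv le_rfl
  -- key inequality : x * φ'(x) ≤ 2 φ(x) for x > 0
  have key : ∀ x : ℝ, 0 < x → x * deriv φ x ≤ 2 * φ x := by
    intro x hx
    have hftc : ∫ t in (0:ℝ)..x, deriv φ t = φ x - φ 0 := by
      apply intervalIntegral.integral_deriv_eq_sub
      · intro t _; exact hdiff t
      · exact hdc.intervalIntegrable 0 x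
    have hpt : ∀ t ∈ Set.Icc (0:ℝ) x, (t / x) * deriv φ x ≤ deriv φ t := by
      intro t ht
      have h1 : (1 - t / x) • (0:ℝ) + (t / x) • x = t := by
        simp only [smul_eq_mul, mul_zero, zero_add]
        field_simp [hx.ne']
      have := hconc.2 (Set.self_mem_Ici) (Set.mem_Ici.2 hx.le)
        (show (0:ℝ) ≤ 1 - t / x by
          have : t / x ≤ 1 := (div_le_one hx).2 ht.2
          linarith)
        (show (0:ℝ) ≤ t / x from div_nonneg ht.1 hx.le) (by ring)
      rw [h1] at this
      simpa [h0', smul_eq_mul] using this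
    have hmono : ∫ t in (0:ℝ)..x, (t / x) * deriv φ x ≤ ∫ t in (0:ℝ)..x, deriv φ t := by
      apply intervalIntegral.integral_mono_on hx.le
      · exact (by continuity : Continuous fun t : ℝ => (t / x) * deriv φ x).intervalIntegrable 0 x
      · exact hdc.intervalIntegrable 0 x
      · exact hpt
    have hval : ∫ t in (0:ℝ)..x, (t / x) * deriv φ x = x * deriv φ x / 2 := by
      have : ∫ t in (0:ℝ)..x, (t / x) * deriv φ x
          = (∫ t in (0:ℝ)..x, t) * (deriv φ x / x) := by
        rw [← intervalIntegral.integral_mul_const]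
        congr 1; ext t; ring
      rw [this, integral_id]
      field_simp
      ring
    rw [hftc, h0, hval] at hmono
    linarith
  have hdg : ∀ x ∈ Set.Ioi (0:ℝ),
      HasDerivAt (fun x => φ x / x ^ 2)
        ((deriv φ x * x ^ 2 - φ x * (2 * x)) / (x ^ 2) ^ 2) x := by
    intro x hx
    have hx0 : (x:ℝ) ≠ 0 := ne_of_gt hx
    exact ((hdiff x).hasDerivAt).div
      ((hasDerivAt_pow 2 x).congr_deriv (by ring)) (pow_ne_zero 2 hx0)
  apply antitoneOn_of_deriv_nonpos (convex_Ioi 0)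
  · exact fun x hx => ((hdg x hx).continuousAt).continuousWithinAt
  · intro x hx
    rw [interior_Ioi] at hx
    exact (hdg x hx).differentiableAt.differentiableWithinAt
  · intro x hx
    rw [interior_Ioi] at hx
    rw [(hdg x hx).deriv]
    have hx0 : (0:ℝ) < x := hx
    have hkey := key x hx0
    apply div_nonpos_of_nonpos_of_nonneg
    · nlinarith
    · positivity
end

section
/- For every even convex C^1 function φ with φ(0) = φ'(0) = 0 and φ' concave on [0,∞), the square root of φ is subadditive on [0,∞): for all a, b ≥ 0, √(φ(a+b)) ≤ √(φ(a)) + √(φ(b)). -/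
theorem sqrt_phi_subadditive (φ : ℝ → ℝ)
    (heven : ∀ x : ℝ, φ (-x) = φ x)
    (hconv : ConvexOn ℝ Set.univ φ)
    (hC1 : ContDiff ℝ 1 φ)
    (h0 : φ 0 = 0)
    (h0' : deriv φ 0 = 0)
    (hconc : ConcaveOn ℝ (Set.Ici 0) (deriv φ)) :
    ∀ a b : ℝ, 0 ≤ a → 0 ≤ b →
      Real.sqrt (φ (a + b)) ≤ Real.sqrt (φ a) + Real.sqrt (φ b) := by
  have hd : Differentiable ℝ φ := hC1.differentiable one_ne_zero
  have hdc : Continuous (deriv φ) := hC1.continuous_deriv le_rfl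
  -- φ is nonnegative (evenness + convexity)
  have hnonneg : ∀ x : ℝ, 0 ≤ φ x := by
    intro x
    have h := hconv.2 (Set.mem_univ x) (Set.mem_univ (-x))
      (by norm_num : (0:ℝ) ≤ 1/2) (by norm_num : (0:ℝ) ≤ 1/2) (by norm_num)
    have h1 : (1/2 : ℝ) • x + (1/2 : ℝ) • (-x) = 0 := by
      simp [smul_eq_mul]
    rw [h1, h0, heven] at h
    simp only [smul_eq_mul] at h
    linarith
  -- FTC
  have ftc : ∀ u v : ℝ, (∫ t in u..v, deriv φ t) = φ v - φ u := fun u v =>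
    intervalIntegral.integral_deriv_eq_sub (fun t _ => hd t) (hdc.intervalIntegrable u v)
  -- pointwise concavity inequality: below x
  have lemA : ∀ x : ℝ, 0 < x → ∀ t ∈ Set.Icc (0:ℝ) x,
      t / x * deriv φ x ≤ deriv φ t := by
    intro x hx t ht
    have ha1 : (0:ℝ) ≤ 1 - t/x := by
      have : t / x ≤ 1 := (div_le_one hx).mpr ht.2
      linarith
    have ha2 : (0:ℝ) ≤ t/x := div_nonneg ht.1 hx.le
    have h := hconc.2 (Set.self_mem_Ici) (Set.mem_Ici.mpr hx.le) ha1 ha2 (by ring)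
    have hx' : (1 - t/x) • (0:ℝ) + (t/x) • x = t := by
      simp only [smul_eq_mul, mul_zero, zero_add]
      field_simp
    rw [hx', h0'] at h
    simp only [smul_eq_mul, mul_zero, zero_add] at h
    linarith [h]
  -- pointwise concavity inequality: above x
  have lemB : ∀ x : ℝ, 0 < x → ∀ t : ℝ, x ≤ t →
      deriv φ t ≤ t / x * deriv φ x := by
    intro x hx t hxt
    have ht : 0 < t := lt_of_lt_of_le hx hxt
    have ha1 : (0:ℝ) ≤ 1 - x/t := by
      have : x / t ≤ 1 := (div_le_one ht).mpr hxt
      linarith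
    have ha2 : (0:ℝ) ≤ x/t := div_nonneg hx.le ht.le
    have h := hconc.2 (Set.self_mem_Ici) (Set.mem_Ici.mpr ht.le) ha1 ha2 (by ring)
    have hx' : (1 - x/t) • (0:ℝ) + (x/t) • t = x := by
      simp only [smul_eq_mul, mul_zero, zero_add]
      field_simp
    rw [hx', h0'] at h
    simp only [smul_eq_mul, mul_zero, zero_add] at h
    -- h : x/t * deriv φ t ≤ deriv φ x
    rw [div_mul_eq_mul_div, div_le_iff₀ ht] at h
    rw [div_mul_eq_mul_div, le_div_iff₀ hx]
    nlinarith [h]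
  -- key1 : x * φ'(x) ≤ 2 φ(x)
  have key1 : ∀ x : ℝ, 0 < x → x * deriv φ x ≤ 2 * φ x := by
    intro x hx
    have hint : (∫ t in (0:ℝ)..x, t * (deriv φ x / x)) ≤ ∫ t in (0:ℝ)..x, deriv φ t := by
      apply intervalIntegral.integral_mono_on hx.le
      · exact (continuous_id.mul continuous_const).intervalIntegrable 0 x
      · exact hdc.intervalIntegrable 0 x
      · intro t ht
        have h := lemA x hx t ht
        calc t * (deriv φ x / x) = t / x * deriv φ x := by ring
          _ ≤ deriv φ t := h
    rw [ftc 0 x, intervalIntegral.integral_mul_const, integral_id, h0] at hint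
    have hrw : (x^2 - 0^2)/2 * (deriv φ x / x) = x * deriv φ x / 2 := by
      field_simp
      ring
    rw [hrw] at hint
    linarith
  -- key2 : ratio monotonicity
  have key : ∀ x y : ℝ, 0 < x → x ≤ y → x^2 * φ y ≤ y^2 * φ x := by
    intro x y hx hxy
    have hint : (∫ t in x..y, deriv φ t) ≤ ∫ t in x..y, t * (deriv φ x / x) := by
      apply intervalIntegral.integral_mono_on hxy
      · exact hdc.intervalIntegrable x y
      · exact (continuous_id.mul continuous_const).intervalIntegrable x y
      · intro t ht
        have h := lemB x hx t ht.1
        calc deriv φ t ≤ t / x * deriv φ x := h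
          _ = t * (deriv φ x / x) := by ring
    rw [ftc x y, intervalIntegral.integral_mul_const, integral_id] at hint
    -- hint : φ y - φ x ≤ (y^2 - x^2)/2 * (deriv φ x / x)
    have h2 : 2 * x * (φ y - φ x) ≤ (y^2 - x^2) * deriv φ x := by
      have hne : x ≠ 0 := hx.ne'
      have := mul_le_mul_of_nonneg_left hint (by positivity : (0:ℝ) ≤ 2 * x)
      calc 2 * x * (φ y - φ x) ≤ 2 * x * ((y^2 - x^2)/2 * (deriv φ x / x)) := this
        _ = (y^2 - x^2) * deriv φ x := by field_simp
    have hk1 := key1 x hx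
    have hyx : 0 ≤ y^2 - x^2 := by nlinarith
    nlinarith [hnonneg x, mul_le_mul_of_nonneg_left hk1 hyx]
  -- conclude
  intro a b ha hb
  rcases eq_or_lt_of_le ha with rfl | ha'
  · simp [h0, Real.sqrt_nonneg]
  rcases eq_or_lt_of_le hb with rfl | hb'
  · simp [h0, Real.sqrt_nonneg]
  set s := a + b with hs_def
  have hs : 0 < s := by positivity
  have h1 : a * Real.sqrt (φ s) ≤ s * Real.sqrt (φ a) := by
    have h := Real.sqrt_le_sqrt (key a s ha' (by linarith))
    rwa [Real.sqrt_mul (sq_nonneg a), Real.sqrt_mul (sq_nonneg s),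
      Real.sqrt_sq ha'.le, Real.sqrt_sq hs.le] at h
  have h2 : b * Real.sqrt (φ s) ≤ s * Real.sqrt (φ b) := by
    have h := Real.sqrt_le_sqrt (key b s hb' (by linarith))
    rwa [Real.sqrt_mul (sq_nonneg b), Real.sqrt_mul (sq_nonneg s),
      Real.sqrt_sq hb'.le, Real.sqrt_sq hs.le] at h
  have hsum : s * Real.sqrt (φ s) ≤ s * (Real.sqrt (φ a) + Real.sqrt (φ b)) := by
    have : s * Real.sqrt (φ s) = a * Real.sqrt (φ s) + b * Real.sqrt (φ s) := by ring
    linarith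
  exact le_of_mul_le_mul_left hsum hs
end

section
/- Let φ be an even convex C¹ function with φ(0) = φ'(0) = 0, φ''(0) = 1, φ' concave on [0,∞), and lim_{x→∞} φ'(x)/x = 0. Then there exists a probability measure ν on [0,∞) such that φ'(x) = ∫_{[0,∞)} min(x, y) dν(y) for every x ≥ 0. -/
open MeasureTheory Set Filter Topology

private lemma aux_repr (g : ℝ → ℝ) (hg_cont : Continuous g) (hg_mono : Monotone g)
    (hconc : ConcaveOn ℝ (Set.Ici 0) g) (hg0 : g 0 = 0)
    (hd0 : HasDerivAt g 1 0)
    (hlim : Filter.Tendsto (fun x => g x / x) Filter.atTop (nhds 0)) :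
    ∃ ν : Measure ℝ, IsProbabilityMeasure ν ∧ ν (Set.Iio 0) = 0 ∧
      ∀ x : ℝ, 0 ≤ x → g x = ∫ y, min x y ∂ν := by
  classical
  set h : ℝ → ℝ := fun t => if t < 0 then 1 else sSup (slope g t '' Set.Ioi t) with hh
  -- slope inequalities
  have ineq1 : ∀ t u v : ℝ, 0 ≤ t → t < u → u < v → slope g t v ≤ slope g t u := by
    intro t u v ht htu huv
    refine hconc.slope_anti (mem_Ici.mpr ht) ⟨mem_Ici.mpr (ht.trans htu.le), ?_⟩
      ⟨mem_Ici.mpr (ht.trans (htu.trans huv).le), ?_⟩ huv.le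
    · simp [ne_of_gt htu]
    · simp [ne_of_gt (htu.trans huv)]
  have ineq2 : ∀ t u v : ℝ, 0 ≤ t → t < u → u < v → slope g u v ≤ slope g t u := by
    intro t u v ht htu huv
    have hu : (0:ℝ) ≤ u := ht.trans htu.le
    have := hconc.slope_anti (mem_Ici.mpr hu) (a := t) (b := v)
      ⟨mem_Ici.mpr ht, by simp [ne_of_lt htu]⟩
      ⟨mem_Ici.mpr (hu.trans huv.le), by simp [ne_of_gt huv]⟩ (htu.le.trans huv.le)
    rwa [slope_comm g u t] at this
  have slope_nonneg : ∀ t u : ℝ, t < u → 0 ≤ slope g t u := by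
    intro t u htu
    rw [slope_def_field]
    exact div_nonneg (sub_nonneg.mpr (hg_mono htu.le)) (sub_nonneg.mpr htu.le)
  have slope0_tendsto : Tendsto (slope g 0) (𝓝[>] 0) (𝓝 1) := by
    refine (hasDerivAt_iff_tendsto_slope.mp hd0).mono_left (nhdsWithin_mono 0 ?_)
    intro x hx
    exact mem_compl_singleton_iff.mpr (ne_of_gt hx)
  have slope0_le_one : ∀ s : ℝ, 0 < s → slope g 0 s ≤ 1 := by
    intro s hs
    refine ge_of_tendsto slope0_tendsto ?_
    filter_upwards [Ioo_mem_nhdsGT_of_mem (left_mem_Ico.mpr hs)] with u hu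
    exact ineq1 0 u s le_rfl hu.1 hu.2
  have slope_le_one : ∀ t s : ℝ, 0 ≤ t → t < s → slope g t s ≤ 1 := by
    intro t s ht hts
    rcases eq_or_lt_of_le ht with rfl | ht'
    · exact slope0_le_one s hts
    · exact (ineq2 0 t s le_rfl ht' hts).trans (slope0_le_one t ht')
  have hbdd : ∀ t : ℝ, 0 ≤ t → BddAbove (slope g t '' Set.Ioi t) := by
    intro t ht
    refine ⟨1, ?_⟩
    rintro y ⟨s, hs, rfl⟩
    exact slope_le_one t s ht hs
  have hne : ∀ t : ℝ, (slope g t '' Set.Ioi t).Nonempty :=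
    fun t => ⟨_, mem_image_of_mem _ (mem_Ioi.mpr (lt_add_one t))⟩
  have h_eq : ∀ t : ℝ, 0 ≤ t → h t = sSup (slope g t '' Set.Ioi t) := by
    intro t ht; simp only [hh, if_neg (not_lt.mpr ht)]
  have slope_le_h : ∀ t s : ℝ, 0 ≤ t → t < s → slope g t s ≤ h t := by
    intro t s ht hts
    rw [h_eq t ht]
    exact le_csSup (hbdd t ht) (mem_image_of_mem _ hts)
  have h_le_slope : ∀ t u : ℝ, 0 ≤ t → t < u → h u ≤ slope g t u := by
    intro t u ht htu
    rw [h_eq u (ht.trans htu.le)]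
    refine csSup_le (hne u) ?_
    rintro y ⟨s, hs, rfl⟩
    exact ineq2 t u s ht htu hs
  have h_nonneg : ∀ t : ℝ, 0 ≤ h t := by
    intro t
    rcases lt_or_ge t 0 with ht | ht
    · simp [hh, if_pos ht]
    · exact (slope_nonneg t (t+1) (lt_add_one t)).trans (slope_le_h t (t+1) ht (lt_add_one t))
  have h_le_one : ∀ t : ℝ, h t ≤ 1 := by
    intro t
    rcases lt_or_ge t 0 with ht | ht
    · simp [hh, if_pos ht]
    · rw [h_eq t ht]
      refine csSup_le (hne t) ?_
      rintro y ⟨s, hs, rfl⟩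
      exact slope_le_one t s ht hs
  have h_one_neg : ∀ t : ℝ, t < 0 → h t = 1 := fun t ht => by simp [hh, if_pos ht]
  have h_anti : Antitone h := by
    intro t u htu
    rcases lt_or_ge t 0 with ht | ht
    · rw [h_one_neg t ht]; exact h_le_one u
    · rcases eq_or_lt_of_le htu with rfl | htu'
      · exact le_rfl
      · exact (h_le_slope t u ht htu').trans (slope_le_h t u ht htu')
  have h0 : h 0 = 1 := by
    refine le_antisymm (h_le_one 0) ?_
    refine le_of_tendsto slope0_tendsto ?_
    filter_upwards [self_mem_nhdsWithin] with u hu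
    exact slope_le_h 0 u le_rfl hu
  have h_tendsto_atTop : Tendsto h atTop (𝓝 0) := by
    refine tendsto_of_tendsto_of_tendsto_of_le_of_le' tendsto_const_nhds hlim ?_ ?_
    · filter_upwards with t using h_nonneg t
    · filter_upwards [eventually_gt_atTop 0] with t ht
      have := h_le_slope 0 t le_rfl ht
      rwa [slope_def_field, hg0, sub_zero, sub_zero] at this
  have tendsto_slope_right : ∀ t : ℝ, 0 ≤ t → Tendsto (slope g t) (𝓝[>] t) (𝓝 (h t)) := by
    intro t ht
    refine tendsto_order.2 ⟨fun l hl => ?_, fun m hm => ?_⟩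
    · rw [h_eq t ht] at hl
      obtain ⟨y, ⟨s, hs, rfl⟩, hy⟩ := exists_lt_of_lt_csSup (hne t) hl
      filter_upwards [Ioo_mem_nhdsGT_of_mem (left_mem_Ico.mpr hs)] with u hu
      exact hy.trans_le (ineq1 t u s ht hu.1 hu.2)
    · filter_upwards [self_mem_nhdsWithin] with u hu
      exact (slope_le_h t u ht hu).trans_lt hm
  have hasDerivR : ∀ t : ℝ, 0 ≤ t → HasDerivWithinAt g (h t) (Set.Ioi t) t := by
    intro t ht
    rw [hasDerivWithinAt_iff_tendsto_slope]
    have hset : Set.Ioi t \ {t} = Set.Ioi t := Set.diff_singleton_eq_self (by simp)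
    rw [hset]
    exact tendsto_slope_right t ht
  have h_right_cont : ∀ t : ℝ, 0 ≤ t → Tendsto h (𝓝[>] t) (𝓝 (h t)) := by
    intro t ht
    refine tendsto_order.2 ⟨fun l hl => ?_, fun m hm => ?_⟩
    · rw [h_eq t ht] at hl
      obtain ⟨y, ⟨s, hs, rfl⟩, hy⟩ := exists_lt_of_lt_csSup (hne t) hl
      have hc : ContinuousAt (fun u => (g s - g u) / (s - u)) t := by
        refine ContinuousAt.div (by fun_prop) (by fun_prop) ?_
        exact sub_ne_zero.mpr (ne_of_gt hs)
      have hct : (g s - g t) / (s - t) = slope g t s := (slope_def_field g t s).symm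
      have hlt : l < (g s - g t) / (s - t) := by rw [hct]; exact hy
      have hev : ∀ᶠ u in 𝓝[>] t, l < (g s - g u) / (s - u) :=
        (hc.eventually (eventually_gt_nhds hlt)).filter_mono nhdsWithin_le_nhds
      filter_upwards [hev, Ioo_mem_nhdsGT_of_mem (left_mem_Ico.mpr hs)] with u hu1 hu2
      refine hu1.trans_le ?_
      have : slope g u s ≤ h u := slope_le_h u s (ht.trans hu2.1.le) hu2.2
      rwa [slope_def_field] at this
    · filter_upwards [self_mem_nhdsWithin] with u hu
      exact (h_anti hu.le).trans_lt hm
  have rightCont : ∀ x : ℝ, ContinuousWithinAt h (Set.Ici x) x := by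
    intro x
    rcases lt_or_ge x 0 with hx | hx
    · have hev : (fun _ : ℝ => (1:ℝ)) =ᶠ[𝓝 x] h := by
        filter_upwards [Iio_mem_nhds hx] with y hy
        exact (h_one_neg y hy).symm
      exact (continuousAt_const.congr hev).continuousWithinAt
    · rw [← Set.Ioi_insert, continuousWithinAt_insert_self]
      exact h_right_cont x hx
  -- the Stieltjes function
  set F : StieltjesFunction ℝ :=
    { toFun := fun t => -h t
      mono' := fun a b hab => neg_le_neg (h_anti hab)
      right_continuous' := fun x => (rightCont x).neg } with hF
  have FatBot : Tendsto F atBot (𝓝 (-1)) := by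
    refine Tendsto.congr' ?_ (tendsto_const_nhds (α := ℝ) (f := atBot))
    filter_upwards [eventually_lt_atBot (0:ℝ)] with t ht
    show (-1 : ℝ) = F t
    simp [hF, h_one_neg t ht]
  have FatTop : Tendsto F atTop (𝓝 0) := by
    have := h_tendsto_atTop.neg
    rw [neg_zero] at this
    exact this
  set ν : Measure ℝ := F.measure with hν
  have hUniv : ν Set.univ = 1 := by
    rw [hν, F.measure_univ FatBot FatTop]
    norm_num
  have hprob : IsProbabilityMeasure ν := ⟨hUniv⟩
  have hIic : ∀ t : ℝ, ν (Set.Iic t) = ENNReal.ofReal (1 - h t) := by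
    intro t
    rw [hν, F.measure_Iic FatBot]
    congr 1
    show -h t - (-1) = 1 - h t
    ring
  have hIio0 : ν (Set.Iio 0) = 0 := by
    have hsub : Set.Iio (0:ℝ) ⊆ ⋃ n : ℕ, Set.Iic (-(1/(n+1))) := by
      intro y hy
      have hy' : (0:ℝ) < -y := by simpa using hy
      obtain ⟨n, hn⟩ := exists_nat_one_div_lt hy'
      exact mem_iUnion.mpr ⟨n, by simp only [mem_Iic]; linarith⟩
    refine le_antisymm ?_ zero_le
    refine le_trans (measure_mono hsub) (le_trans (measure_iUnion_le _) ?_)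
    have hz : ∀ n : ℕ, ν (Set.Iic (-(1/(n+1):ℝ))) = 0 := by
      intro n
      have hpos : (0:ℝ) < 1/(n+1) := by positivity
      rw [hIic, h_one_neg _ (by linarith)]
      simp
    rw [tsum_congr hz, tsum_zero]
  have hIoi : ∀ t : ℝ, 0 ≤ t → ν (Set.Ioi t) = ENNReal.ofReal (h t) := by
    intro t ht
    have hcompl := measure_compl (μ := ν) (measurableSet_Iic (a := t)) (measure_ne_top ν _)
    rw [compl_Iic, hUniv, hIic] at hcompl
    rw [hcompl, ← ENNReal.ofReal_one,
      ← ENNReal.ofReal_sub _ (by linarith [h_le_one t] : (0:ℝ) ≤ 1 - h t)]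
    norm_num
  -- measurability and FTC
  have h_meas : Measurable h := h_anti.measurable
  have hInt : ∀ a b : ℝ, IntervalIntegrable h volume a b := fun a b => h_anti.intervalIntegrable
  set G : ℝ → ℝ := fun u => ∫ t in (0:ℝ)..u, h t with hG
  have hasDerivG : ∀ t : ℝ, 0 ≤ t → HasDerivWithinAt G (h t) (Set.Ici t) t := by
    intro t ht
    exact intervalIntegral.integral_hasDerivWithinAt_right (hInt 0 t)
      (h_meas.aestronglyMeasurable.stronglyMeasurableAtFilter)
      ((rightCont t).mono Set.Ioi_subset_Ici_self)
  have g_eq : ∀ x : ℝ, 0 ≤ x → g x = G x := by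
    intro x hx
    rcases eq_or_lt_of_le hx with rfl | hx'
    · simp [hG, hg0]
    · have key := eq_of_has_deriv_right_eq (a := 0) (b := x) (f' := h) (f := g) (g := G)
        (fun y hy => (hasDerivR y hy.1).Ici_of_Ioi)
        (fun y hy => hasDerivG y hy.1)
        hg_cont.continuousOn
        (intervalIntegral.continuous_primitive hInt 0).continuousOn
        (by simp [hG, hg0])
      exact key x ⟨hx, le_rfl⟩
  refine ⟨ν, hprob, hIio0, ?_⟩
  intro x hx
  have hae0 : ∀ᵐ y ∂ν, 0 ≤ y := by
    rw [ae_iff]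
    have hset : {y : ℝ | ¬ 0 ≤ y} = Set.Iio 0 := by ext y; simp [not_le]
    rw [hset]; exact hIio0
  have f_nn : 0 ≤ᵐ[ν] fun y => min x y := by
    filter_upwards [hae0] with y hy
    exact le_min hx hy
  have intble : Integrable (fun y => min x y) ν := by
    refine ⟨(continuous_const.min continuous_id).aestronglyMeasurable, ?_⟩
    refine HasFiniteIntegral.of_bounded (C := x) ?_
    filter_upwards [hae0] with y hy
    rw [Real.norm_eq_abs, abs_le]
    exact ⟨by nlinarith [le_min hx hy], min_le_left x y⟩
  have key := intble.integral_eq_integral_meas_lt f_nn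
  simp only [measureReal_def] at key
  have hsets : ∀ t ∈ Set.Ioi (0:ℝ),
      (ν {a : ℝ | t < min x a}).toReal = (Set.Ioo 0 x).indicator h t := by
    intro t ht
    rcases lt_or_ge t x with htx | htx
    · have hs : {a : ℝ | t < min x a} = Set.Ioi t := by
        ext a; simp [lt_min_iff, htx]
      rw [hs, hIoi t (le_of_lt ht), ENNReal.toReal_ofReal (h_nonneg t)]
      exact (Set.indicator_of_mem (Set.mem_Ioo.mpr ⟨ht, htx⟩) h).symm
    · have hs : {a : ℝ | t < min x a} = (∅ : Set ℝ) := by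
        ext a
        simp only [mem_setOf_eq, mem_empty_iff_false, iff_false, not_lt, lt_min_iff, not_and]
        intro hcon
        linarith
      rw [hs, Set.indicator_of_notMem (fun hmem => absurd (Set.mem_Ioo.mp hmem).2 (not_lt.mpr htx))]
      simp
  rw [g_eq x hx, key]
  rw [setIntegral_congr_fun measurableSet_Ioi hsets,
    setIntegral_indicator measurableSet_Ioo,
    inter_eq_self_of_subset_right Set.Ioo_subset_Ioi_self,
    ← integral_Ioc_eq_integral_Ioo, ← intervalIntegral.integral_of_le hx]

theorem exists_measure_repr_deriv (φ : ℝ → ℝ)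
    (heven : ∀ x : ℝ, φ (-x) = φ x)
    (hconv : ConvexOn ℝ Set.univ φ)
    (hC1 : ContDiff ℝ 1 φ)
    (h0 : φ 0 = 0)
    (h0' : deriv φ 0 = 0)
    (hconc : ConcaveOn ℝ (Set.Ici 0) (deriv φ))
    (h0'' : HasDerivAt (deriv φ) 1 0)
    (hlim : Filter.Tendsto (fun x => deriv φ x / x) Filter.atTop (nhds 0)) :
    ∃ ν : Measure ℝ, IsProbabilityMeasure ν ∧ ν (Set.Iio 0) = 0 ∧
      ∀ x : ℝ, 0 ≤ x → deriv φ x = ∫ y, min x y ∂ν := by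
  have hdiff : ∀ x ∈ Set.univ, DifferentiableAt ℝ φ x :=
    fun x _ => (hC1.differentiable one_ne_zero).differentiableAt
  have hmono : Monotone (deriv φ) := monotoneOn_univ.mp (hconv.monotoneOn_deriv hdiff)
  have hcont : Continuous (deriv φ) := hC1.continuous_deriv le_rfl
  exact aux_repr (deriv φ) hcont hmono hconc h0' h0'' hlim
end

section
/- Let A and B be real-valued integrable random variables and define, for a random variable Z and real x, H̃_Z(x) = inf_{t < x} (x − t)^{-1} E((Z − t)_+). Then for all real numbers x and t, H̃_{A+B}(x) ≤ max(H̃_A(t), H̃_B(x − t)). -/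
open MeasureTheory

noncomputable def Htilde {Ω : Type*} [MeasurableSpace Ω] (μ : Measure Ω)
    (Z : Ω → ℝ) (x : ℝ) : ℝ :=
  sInf ((fun t => (x - t)⁻¹ * ∫ ω, max (Z ω - t) 0 ∂μ) '' Set.Iio x)

lemma weighted_le_max {p q a b : ℝ} (hp : 0 < p) (hq : 0 < q) :
    (p + q)⁻¹ * (p * a + q * b) ≤ max a b := by
  rw [inv_mul_le_iff₀ (by positivity)]
  have h1 : p * a ≤ p * max a b := by nlinarith [le_max_left a b]
  have h2 : q * b ≤ q * max a b := by nlinarith [le_max_right a b]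
  nlinarith

lemma Htilde_bddBelow {Ω : Type*} [MeasurableSpace Ω] (μ : Measure Ω)
    (Z : Ω → ℝ) (x : ℝ) :
    BddBelow ((fun t => (x - t)⁻¹ * ∫ ω, max (Z ω - t) 0 ∂μ) '' Set.Iio x) := by
  refine ⟨0, ?_⟩
  rintro _ ⟨t, ht, rfl⟩
  have hx : 0 < x - t := by simp at ht; linarith
  have : 0 ≤ ∫ ω, max (Z ω - t) 0 ∂μ :=
    integral_nonneg fun ω => le_max_right _ _
  positivity

theorem Htilde_add_le_max
    {Ω : Type*} [MeasurableSpace Ω] (μ : Measure Ω) [IsProbabilityMeasure μ]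
    (A B : Ω → ℝ) (hA : Integrable A μ) (hB : Integrable B μ) :
    ∀ x t : ℝ,
      Htilde μ (fun ω => A ω + B ω) x ≤ max (Htilde μ A t) (Htilde μ B (x - t)) := by
  intro x t
  apply le_of_forall_pos_le_add
  intro ε hε
  have hne1 : ((fun s => (t - s)⁻¹ * ∫ ω, max (A ω - s) 0 ∂μ) '' Set.Iio t).Nonempty :=
    (Set.nonempty_Iio).image _
  have hne2 : ((fun s => (x - t - s)⁻¹ * ∫ ω, max (B ω - s) 0 ∂μ) '' Set.Iio (x - t)).Nonempty :=
    (Set.nonempty_Iio).image _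
  obtain ⟨a, ⟨s, hs, rfl⟩, has⟩ := Real.lt_sInf_add_pos hne1 hε
  obtain ⟨b, ⟨u, hu, rfl⟩, hub⟩ := Real.lt_sInf_add_pos hne2 hε
  simp only [Set.mem_Iio] at hs hu
  have hp : 0 < t - s := by linarith
  have hq : 0 < x - t - u := by linarith
  have hiA : Integrable (fun ω => max (A ω - s) 0) μ :=
    (hA.sub (integrable_const s)).pos_part
  have hiB : Integrable (fun ω => max (B ω - u) 0) μ :=
    (hB.sub (integrable_const u)).pos_part
  have hiAB : Integrable (fun ω => max (A ω + B ω - (s + u)) 0) μ :=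
    ((hA.add hB).sub (integrable_const (s + u))).pos_part
  have hmem : (x - (s + u))⁻¹ * ∫ ω, max (A ω + B ω - (s + u)) 0 ∂μ ∈
      (fun r => (x - r)⁻¹ * ∫ ω, max ((fun ω => A ω + B ω) ω - r) 0 ∂μ) '' Set.Iio x :=
    Set.mem_image_of_mem _ (by simp only [Set.mem_Iio]; linarith)
  have h1 : Htilde μ (fun ω => A ω + B ω) x ≤
      (x - (s + u))⁻¹ * ∫ ω, max (A ω + B ω - (s + u)) 0 ∂μ :=
    csInf_le (Htilde_bddBelow μ _ x) hmem
  have hint : (∫ ω, max (A ω + B ω - (s + u)) 0 ∂μ) ≤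
      (∫ ω, max (A ω - s) 0 ∂μ) + ∫ ω, max (B ω - u) 0 ∂μ := by
    rw [← integral_add hiA hiB]
    refine integral_mono hiAB (hiA.add hiB) fun ω => ?_
    have h1' : A ω - s ≤ max (A ω - s) 0 := le_max_left _ _
    have h2' : B ω - u ≤ max (B ω - u) 0 := le_max_left _ _
    have h3' : (0:ℝ) ≤ max (A ω - s) 0 + max (B ω - u) 0 := by
      have := le_max_right (A ω - s) 0
      have := le_max_right (B ω - u) 0
      linarith
    exact max_le (by linarith) h3'
  set IA := ∫ ω, max (A ω - s) 0 ∂μ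
  set IB := ∫ ω, max (B ω - u) 0 ∂μ
  have key : (x - (s + u))⁻¹ * (IA + IB) ≤
      max ((t - s)⁻¹ * IA) ((x - t - u)⁻¹ * IB) := by
    have h := weighted_le_max (a := (t - s)⁻¹ * IA) (b := (x - t - u)⁻¹ * IB) hp hq
    have hIA : (t - s) * ((t - s)⁻¹ * IA) = IA := by field_simp
    have hIB : (x - t - u) * ((x - t - u)⁻¹ * IB) = IB := by field_simp
    have hsum : (t - s) + (x - t - u) = x - (s + u) := by ring
    rw [hIA, hIB, hsum] at h
    exact h
  have hmax : max ((t - s)⁻¹ * IA) ((x - t - u)⁻¹ * IB) ≤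
      max (Htilde μ A t) (Htilde μ B (x - t)) + ε := by
    have eA : Htilde μ A t =
        sInf ((fun s => (t - s)⁻¹ * ∫ ω, max (A ω - s) 0 ∂μ) '' Set.Iio t) := rfl
    have eB : Htilde μ B (x - t) =
        sInf ((fun s => (x - t - s)⁻¹ * ∫ ω, max (B ω - s) 0 ∂μ) '' Set.Iio (x - t)) := rfl
    have hA' : (t - s)⁻¹ * IA ≤ Htilde μ A t + ε := by rw [eA]; exact has.le
    have hB' : (x - t - u)⁻¹ * IB ≤ Htilde μ B (x - t) + ε := by rw [eB]; exact hub.le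
    have hA'' : Htilde μ A t + ε ≤ max (Htilde μ A t) (Htilde μ B (x - t)) + ε :=
      add_le_add_left (le_max_left _ _) ε
    have hB'' : Htilde μ B (x - t) + ε ≤ max (Htilde μ A t) (Htilde μ B (x - t)) + ε :=
      add_le_add_left (le_max_right _ _) ε
    exact max_le (hA'.trans hA'') (hB'.trans hB'')
  have hxsu : 0 < x - (s + u) := by linarith
  have h3 : (x - (s + u))⁻¹ * ∫ ω, max (A ω + B ω - (s + u)) 0 ∂μ ≤
      (x - (s + u))⁻¹ * (IA + IB) :=
    mul_le_mul_of_nonneg_left hint (by positivity)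
  linarith [key.trans hmax]
end

section
/- For an integrable real random variable Z, the conditional value at risk defined by the variational formula CVar(Z)(u) = inf{t + u^{-1}E((Z−t)_+) : t ∈ ℝ} equals the Hardy–Littlewood maximal quantile Q̃_Z(u) = u^{-1}∫_0^u Q_Z(v)dv for every u ∈ (0,1), where Q_Z(v) = F_Z^{-1}(1−v). -/
open MeasureTheory

section Aux
open Set Filter ProbabilityTheory Topology

/-- Generalized inverse of the cdf. -/
noncomputable def cvarQf (ν : Measure ℝ) (p : ℝ) : ℝ := sInf {x : ℝ | p ≤ cdf ν x}

variable {ν : Measure ℝ} [IsProbabilityMeasure ν]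

lemma cvarQf_nonempty {p : ℝ} (hp : p < 1) : {x : ℝ | p ≤ cdf ν x}.Nonempty := by
  rcases ((tendsto_cdf_atTop ν).eventually_const_lt hp).exists with ⟨y, hy⟩
  exact ⟨y, hy.le⟩

lemma cvarQf_bddBelow {p : ℝ} (hp : 0 < p) : BddBelow {x : ℝ | p ≤ cdf ν x} := by
  rcases ((tendsto_cdf_atBot ν).eventually_lt_const hp).exists with ⟨y, hy⟩
  refine ⟨y, fun z hz => ?_⟩
  by_contra h
  push_neg at h
  exact absurd (hz.trans (monotone_cdf ν h.le)) (not_le.2 hy)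

lemma cvarQf_le_iff {p : ℝ} (hp0 : 0 < p) (hp1 : p < 1) (x : ℝ) :
    cvarQf ν p ≤ x ↔ p ≤ cdf ν x := by
  constructor
  · intro h
    have key : ∀ y, x < y → p ≤ cdf ν y := by
      intro y hy
      obtain ⟨z, hz, hzy⟩ := exists_lt_of_csInf_lt (cvarQf_nonempty hp1) (lt_of_le_of_lt h hy)
      exact hz.trans (monotone_cdf ν hzy.le)
    have htd : Tendsto (cdf ν) (𝓝[>] x) (𝓝 (cdf ν x)) :=
      ((cdf ν).right_continuous x).mono_left (nhdsWithin_mono x Ioi_subset_Ici_self)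
    refine ge_of_tendsto htd ?_
    filter_upwards [self_mem_nhdsWithin] with y hy using key y hy
  · intro h
    exact csInf_le (cvarQf_bddBelow hp0) h

lemma le_cdf_cvarQf {p : ℝ} (hp0 : 0 < p) (hp1 : p < 1) : p ≤ cdf ν (cvarQf ν p) :=
  (cvarQf_le_iff hp0 hp1 _).1 le_rfl

lemma cvarQf_anti (ν : Measure ℝ) [IsProbabilityMeasure ν] :
    AntitoneOn (fun v => cvarQf ν (1 - v)) (Set.Ioo 0 1) := by
  intro v hv v' hv' hvv'
  refine (cvarQf_le_iff (by linarith [hv'.2]) (by linarith [hv'.1]) _).2 ?_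
  exact le_trans (by linarith) (le_cdf_cvarQf (by linarith [hv.2]) (by linarith [hv.1]))

lemma cvarQf_gt_set (ν : Measure ℝ) [IsProbabilityMeasure ν] (x : ℝ) :
    {v : ℝ | x < cvarQf ν (1 - v)} ∩ Set.Ioo 0 1 = Set.Ioo 0 (1 - cdf ν x) := by
  ext v
  simp only [Set.mem_inter_iff, Set.mem_setOf_eq, Set.mem_Ioo]
  constructor
  · rintro ⟨h, h0, h1⟩
    refine ⟨h0, ?_⟩
    by_contra hc
    push_neg at hc
    exact absurd ((cvarQf_le_iff (by linarith) (by linarith) x).2 (by linarith)) (not_le.2 h)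
  · rintro ⟨h0, h1⟩
    have hcx : 0 ≤ cdf ν x := cdf_nonneg ν x
    have hv1 : v < 1 := by linarith
    refine ⟨?_, h0, hv1⟩
    by_contra hc
    push_neg at hc
    have := (cvarQf_le_iff (by linarith) (by linarith) x).1 hc
    linarith

lemma cvarQf_aemeas : AEMeasurable (fun v => cvarQf ν (1 - v)) (volume.restrict (Set.Ioo 0 1)) :=
  aemeasurable_restrict_of_antitoneOn measurableSet_Ioo (cvarQf_anti ν)

lemma cvar_tail_meas (t : ℝ) :
    ν {x : ℝ | t < x} = ENNReal.ofReal (1 - cdf ν t) := by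
  have h1 : {x : ℝ | t < x} = (Set.Iic t)ᶜ := by ext x; simp [Set.mem_Iic, not_le]
  rw [h1, prob_compl_eq_one_sub measurableSet_Iic, ← ofReal_cdf ν t,
    ← ENNReal.ofReal_one, ← ENNReal.ofReal_sub _ (cdf_nonneg ν t)]

lemma cvar_key_lintegral (t : ℝ) :
    ∫⁻ x, ENNReal.ofReal (max (x - t) 0) ∂ν
      = ∫⁻ v in Set.Ioo (0:ℝ) 1, ENNReal.ofReal (max (cvarQf ν (1 - v) - t) 0) := by
  rw [lintegral_eq_lintegral_meas_lt (f := fun x => max (x - t) 0) ν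
      (ae_of_all _ fun x => le_max_right _ _)
      (by fun_prop : AEMeasurable (fun x : ℝ => max (x - t) 0) ν),
    lintegral_eq_lintegral_meas_lt (f := fun v => max (cvarQf ν (1 - v) - t) 0) _
      (ae_of_all _ fun v => le_max_right _ _)
      ((cvarQf_aemeas.sub_const t).max aemeasurable_const)]
  refine setLIntegral_congr_fun_ae measurableSet_Ioi (ae_of_all _ fun s hs => ?_)
  have hs0 : (0:ℝ) < s := hs
  have hset1 : {x : ℝ | s < max (x - t) 0} = {x : ℝ | s + t < x} := by
    ext x; simp only [Set.mem_setOf_eq, lt_max_iff]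
    constructor
    · rintro (h | h) <;> [linarith; linarith]
    · intro h; left; linarith
  have hset2 : {v : ℝ | s < max (cvarQf ν (1 - v) - t) 0}
      = {v : ℝ | s + t < cvarQf ν (1 - v)} := by
    ext v; simp only [Set.mem_setOf_eq, lt_max_iff]
    constructor
    · rintro (h | h) <;> [linarith; linarith]
    · intro h; left; linarith
  rw [hset1, hset2, cvar_tail_meas, Measure.restrict_apply' measurableSet_Ioo, cvarQf_gt_set,
    Real.volume_Ioo, sub_zero]

end Aux

/-- The tail quantile function `Q_Z (v) = F_Z^{-1} (1 - v)`. -/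
noncomputable def tailQuantile {Ω : Type*} [MeasurableSpace Ω] (μ : Measure Ω)
    (Z : Ω → ℝ) (v : ℝ) : ℝ :=
  sInf {x : ℝ | 1 - v ≤ (μ {ω | Z ω ≤ x}).toReal}

theorem cvar_eq_hardy_littlewood
    {Ω : Type*} [MeasurableSpace Ω] (μ : Measure Ω) [IsProbabilityMeasure μ]
    (Z : Ω → ℝ) (hZ : Integrable Z μ) :
    ∀ u : ℝ, u ∈ Set.Ioo (0 : ℝ) 1 →
      sInf {c : ℝ | ∃ t : ℝ, c = t + u⁻¹ * ∫ ω, max (Z ω - t) 0 ∂μ} =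
        u⁻¹ * ∫ v in (0 : ℝ)..u, tailQuantile μ Z v := by
  intro u hu
  obtain ⟨hu0, hu1⟩ := hu
  set ν : Measure ℝ := μ.map Z with hν
  haveI : IsProbabilityMeasure ν := Measure.isProbabilityMeasure_map hZ.aemeasurable
  set Q : ℝ → ℝ := fun v => cvarQf ν (1 - v) with hQdef
  -- tailQuantile = Q
  have h0 : tailQuantile μ Z = Q := by
    funext v
    have hset : {x : ℝ | 1 - v ≤ (μ {ω | Z ω ≤ x}).toReal}
        = {x : ℝ | 1 - v ≤ ProbabilityTheory.cdf ν x} := by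
      ext x
      have : μ {ω | Z ω ≤ x} = ν (Set.Iic x) := by
        rw [hν, Measure.map_apply_of_aemeasurable hZ.aemeasurable measurableSet_Iic]
        rfl
      simp [ProbabilityTheory.cdf_eq_real, measureReal_def, this]
    simp only [tailQuantile, hQdef, cvarQf, hset]
  -- integrability of max (Z - t) 0
  have hZint : ∀ t : ℝ, Integrable (fun ω => max (Z ω - t) 0) μ := fun t =>
    (hZ.sub (integrable_const t)).pos_part
  -- lintegral identity
  have hlin : ∀ t : ℝ, ∫⁻ ω, ENNReal.ofReal (max (Z ω - t) 0) ∂μ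
      = ∫⁻ v in Set.Ioo (0:ℝ) 1, ENNReal.ofReal (max (Q v - t) 0) := by
    intro t
    have hmap : ∫⁻ x, ENNReal.ofReal (max (x - t) 0) ∂ν
        = ∫⁻ ω, ENNReal.ofReal (max (Z ω - t) 0) ∂μ :=
      lintegral_map' (by fun_prop) hZ.aemeasurable
    rw [← hmap, cvar_key_lintegral t]
  have hfin : ∀ t : ℝ, (∫⁻ ω, ENNReal.ofReal (max (Z ω - t) 0) ∂μ) < ⊤ :=
    fun t => (hZint t).lintegral_lt_top
  -- integrability of max (Q - t) 0 on (0,1)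
  have hQmeas : ∀ t : ℝ, AEStronglyMeasurable (fun v => max (Q v - t) 0)
      (volume.restrict (Set.Ioo (0:ℝ) 1)) := fun t =>
    ((cvarQf_aemeas.sub_const t).max aemeasurable_const).aestronglyMeasurable
  have hQint : ∀ t : ℝ, IntegrableOn (fun v => max (Q v - t) 0) (Set.Ioo (0:ℝ) 1) := by
    intro t
    refine ⟨hQmeas t, ?_⟩
    have hnn : 0 ≤ᵐ[volume.restrict (Set.Ioo (0:ℝ) 1)] fun v => max (Q v - t) 0 :=
      ae_of_all _ fun v => le_max_right _ _
    rw [hasFiniteIntegral_iff_ofReal hnn, ← hlin t]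
    exact hfin t
  -- Bochner integral identity
  have hR : ∀ t : ℝ, ∫ ω, max (Z ω - t) 0 ∂μ = ∫ v in Set.Ioo (0:ℝ) 1, max (Q v - t) 0 := by
    intro t
    have hnn1 : 0 ≤ᵐ[μ] fun ω => max (Z ω - t) 0 := ae_of_all _ fun ω => le_max_right _ _
    have hnn2 : 0 ≤ᵐ[volume.restrict (Set.Ioo (0:ℝ) 1)] fun v => max (Q v - t) 0 :=
      ae_of_all _ fun v => le_max_right _ _
    rw [integral_eq_lintegral_of_nonneg_ae hnn1 (hZint t).aestronglyMeasurable,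
      integral_eq_lintegral_of_nonneg_ae hnn2 (hQmeas t), hlin t]
  -- integrability of Q on (0, u)
  have hsub : Set.Ioo (0:ℝ) u ⊆ Set.Ioo (0:ℝ) 1 := Set.Ioo_subset_Ioo le_rfl hu1.le
  have hQmeasu : AEStronglyMeasurable Q (volume.restrict (Set.Ioo (0:ℝ) u)) :=
    (aemeasurable_restrict_of_antitoneOn measurableSet_Ioo
      ((cvarQf_anti ν).mono hsub)).aestronglyMeasurable
  have hvolu : volume (Set.Ioo (0:ℝ) u) < ⊤ := by
    rw [Real.volume_Ioo]; exact ENNReal.ofReal_lt_top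
  have hQanti := cvarQf_anti ν
  have huIoo : u ∈ Set.Ioo (0:ℝ) 1 := ⟨hu0, hu1⟩
  have hQge : ∀ v ∈ Set.Ioo (0:ℝ) u, Q u ≤ Q v := fun v hv =>
    hQanti (hsub hv) huIoo hv.2.le
  have hconstInt : IntegrableOn (fun _ : ℝ => |Q u|) (Set.Ioo (0:ℝ) u) volume :=
    integrableOn_const hvolu.ne
  have hQu : IntegrableOn Q (Set.Ioo (0:ℝ) u) := by
    refine Integrable.mono' (g := fun v => max (Q v - 0) 0 + |Q u|)
      (((hQint 0).mono_set hsub).add hconstInt) hQmeasu ?_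
    refine (ae_restrict_iff' measurableSet_Ioo).2 (ae_of_all _ fun v hv => ?_)
    have h1 : (0:ℝ) ≤ max (Q v - 0) 0 := le_max_right _ _
    have h2 : Q v - 0 ≤ max (Q v - 0) 0 := le_max_left _ _
    have h3 : Q u ≤ Q v := hQge v hv
    have h4 : -|Q u| ≤ Q u := neg_abs_le _
    have h5 : (0:ℝ) ≤ |Q u| := abs_nonneg _
    rw [Real.norm_eq_abs, abs_le]
    constructor
    · show -((Q v - 0) ⊔ 0 + |Q u|) ≤ Q v
      linarith
    · show Q v ≤ (Q v - 0) ⊔ 0 + |Q u|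
      linarith
  have hconst : ∀ t : ℝ, IntegrableOn (fun _ : ℝ => t) (Set.Ioo (0:ℝ) u) :=
    fun t => integrableOn_const hvolu.ne
  have hIooInt : ∀ t : ℝ, ∫ v in Set.Ioo (0:ℝ) u, (Q v - t)
      = (∫ v in Set.Ioo (0:ℝ) u, Q v) - t * u := by
    intro t
    rw [integral_sub hQu (hconst t), setIntegral_const, Real.volume_real_Ioo_of_le hu0.le, sub_zero,
      smul_eq_mul, mul_comm]
  set I : ℝ := ∫ v in Set.Ioo (0:ℝ) u, Q v with hI
  have hinv : u⁻¹ * u = 1 := inv_mul_cancel₀ hu0.ne'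
  have hinvpos : 0 < u⁻¹ := inv_pos.2 hu0
  -- (a) lower bound
  have hlb : ∀ t : ℝ, u⁻¹ * I ≤ t + u⁻¹ * ∫ v in Set.Ioo (0:ℝ) 1, max (Q v - t) 0 := by
    intro t
    have step1 : ∫ v in Set.Ioo (0:ℝ) u, max (Q v - t) 0
        ≤ ∫ v in Set.Ioo (0:ℝ) 1, max (Q v - t) 0 :=
      setIntegral_mono_set (hQint t)
        ((ae_restrict_iff' measurableSet_Ioo).2 (ae_of_all _ fun v _ => le_max_right _ _))
        (HasSubset.Subset.eventuallyLE hsub)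
    have step2 : ∫ v in Set.Ioo (0:ℝ) u, (Q v - t)
        ≤ ∫ v in Set.Ioo (0:ℝ) u, max (Q v - t) 0 :=
      setIntegral_mono (hQu.sub (hconst t)) ((hQint t).mono_set hsub)
        (fun v => le_max_left _ _)
    rw [hIooInt t] at step2
    have : I - t * u ≤ ∫ v in Set.Ioo (0:ℝ) 1, max (Q v - t) 0 := step2.trans step1
    have h6 := mul_le_mul_of_nonneg_left this hinvpos.le
    have h7 : u⁻¹ * (I - t * u) = u⁻¹ * I - t := by
      rw [mul_sub, mul_comm t u, ← mul_assoc, hinv, one_mul]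
    linarith
  -- (b) value at q = Q u
  set q : ℝ := Q u with hq
  have hbval : ∫ v in Set.Ioo (0:ℝ) 1, max (Q v - q) 0 = I - q * u := by
    have hunion : Set.Ioo (0:ℝ) u ∪ Set.Ico u 1 = Set.Ioo (0:ℝ) 1 :=
      Set.Ioo_union_Ico_eq_Ioo hu0 hu1.le
    have hdisj : Disjoint (Set.Ioo (0:ℝ) u) (Set.Ico u 1) :=
      Set.disjoint_left.2 fun v hv hv' => absurd hv.2 (not_lt.2 hv'.1)
    rw [← hunion, setIntegral_union hdisj measurableSet_Ico
      ((hQint q).mono_set (hunion ▸ Set.subset_union_left))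
      ((hQint q).mono_set (hunion ▸ Set.subset_union_right))]
    have e1 : ∫ v in Set.Ioo (0:ℝ) u, max (Q v - q) 0 = ∫ v in Set.Ioo (0:ℝ) u, (Q v - q) := by
      refine setIntegral_congr_fun measurableSet_Ioo fun v hv => ?_
      exact max_eq_left (sub_nonneg.2 (hQge v hv))
    have e2 : ∫ v in Set.Ico u 1, max (Q v - q) 0 = 0 := by
      rw [setIntegral_congr_fun measurableSet_Ico (g := fun _ => (0:ℝ))
        (fun v hv => max_eq_right (sub_nonpos.2 (hQanti huIoo ⟨hu0.trans_le hv.1, hv.2⟩ hv.1)))]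
      simp
    rw [e1, e2, hIooInt q, add_zero]
  -- conclusion
  have hRHS : u⁻¹ * ∫ v in (0:ℝ)..u, tailQuantile μ Z v = u⁻¹ * I := by
    rw [h0, intervalIntegral.integral_of_le hu0.le, MeasureTheory.integral_Ioc_eq_integral_Ioo]
  rw [hRHS]
  have hmem : u⁻¹ * I ∈ {c : ℝ | ∃ t : ℝ, c = t + u⁻¹ * ∫ ω, max (Z ω - t) 0 ∂μ} := by
    refine ⟨q, ?_⟩
    rw [hR q, hbval]
    field_simp
    ring
  have hlb' : ∀ c ∈ {c : ℝ | ∃ t : ℝ, c = t + u⁻¹ * ∫ ω, max (Z ω - t) 0 ∂μ}, u⁻¹ * I ≤ c := by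
    rintro c ⟨t, rfl⟩
    rw [hR t]
    exact hlb t
  exact le_antisymm (csInf_le ⟨u⁻¹ * I, hlb'⟩ hmem) (le_csInf ⟨_, hmem⟩ hlb')
end

section
/- Let U be Poisson with parameter μ > 0 and Z = (U − μ)/μ. Then E(√(U/μ)) ≥ 1 − 1/(8μ) − 7/(8μ²) − 5/(16μ³). -/
open MeasureTheory ProbabilityTheory Real
open scoped Nat

private lemma sqrt_lb' {x : ℝ} (hx : 0 ≤ x) :
    1 + (x-1)/2 - (x-1)^2/8 + (x-1)^3/16 - 5*(x-1)^4/16 ≤ Real.sqrt x := by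
  have ht : 0 ≤ Real.sqrt x := Real.sqrt_nonneg x
  have hx2 : Real.sqrt x ^ 2 = x := Real.sq_sqrt hx
  set t := Real.sqrt x with htdef
  rw [← hx2]
  have key : t - (1 + (t^2-1)/2 - (t^2-1)^2/8 + (t^2-1)^3/16 - 5*(t^2-1)^4/16)
      = t * (t-1)^4 * (16 + 29*t + 20*t^2 + 5*t^3) / 16 := by ring
  have h4 : 0 ≤ t * (t-1)^4 * (16 + 29*t + 20*t^2 + 5*t^3) / 16 := by positivity
  linarith

private lemma cd2' (n : ℕ) : (n.descFactorial 2 : ℝ) = n^2 - n := by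
  rcases n with _ | m
  · simp
  · have : (m+1).descFactorial 2 = m * ((m+1) * 1) := rfl
    rw [this]; push_cast; ring

private lemma cd3' (n : ℕ) : (n.descFactorial 3 : ℝ) = n^3 - 3*n^2 + 2*n := by
  rcases n with _ | _ | m
  · simp
  · norm_num [Nat.descFactorial]
  · have : (m+2).descFactorial 3 = m * ((m+1) * ((m+2) * 1)) := rfl
    rw [this]; push_cast; ring

private lemma cd4' (n : ℕ) : (n.descFactorial 4 : ℝ) = n^4 - 6*n^3 + 11*n^2 - 6*n := by
  rcases n with _ | _ | _ | m
  · simp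
  · norm_num [Nat.descFactorial]
  · norm_num [Nat.descFactorial]
  · have : (m+3).descFactorial 4 = m * ((m+1) * ((m+2) * ((m+3) * 1))) := rfl
    rw [this]; push_cast; ring

private lemma hs_exp' (x : ℝ) : HasSum (fun n : ℕ => x ^ n / n !) (Real.exp x) := by
  rw [Real.exp_eq_exp_ℝ]
  exact NormedSpace.expSeries_div_hasSum_exp x

private lemma hs_desc' (x : ℝ) (j : ℕ) :
    HasSum (fun n : ℕ => (n.descFactorial j : ℝ) * x ^ n / n !) (x ^ j * Real.exp x) := by
  have h := (hs_exp' x).mul_left (x ^ j)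
  have heq : (fun m : ℕ => x ^ j * (x ^ m / m !)) =
      fun m : ℕ => ((m + j).descFactorial j : ℝ) * x ^ (m + j) / (m + j)! := by
    funext m
    have hfac : (m : ℕ)! * (m + j).descFactorial j = (m + j)! := by
      have := Nat.factorial_mul_descFactorial (n := m + j) (k := j) (Nat.le_add_left j m)
      simpa using this
    have hfacR : ((m)! : ℝ) * ((m + j).descFactorial j : ℝ) = ((m + j)! : ℝ) := by
      exact_mod_cast congrArg (Nat.cast (R := ℝ)) hfac
    have h1 : ((m)! : ℝ) ≠ 0 := Nat.cast_ne_zero.mpr (Nat.factorial_ne_zero m)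
    have h2 : ((m + j)! : ℝ) ≠ 0 := Nat.cast_ne_zero.mpr (Nat.factorial_ne_zero _)
    field_simp
    rw [pow_add]
    linear_combination (-(x ^ m * x ^ j)) * hfacR
  rw [heq] at h
  have h2 := (hasSum_nat_add_iff (f := fun n : ℕ => (n.descFactorial j : ℝ) * x ^ n / n !) j).mp h
  have hzero : ∑ i ∈ Finset.range j, (i.descFactorial j : ℝ) * x ^ i / i ! = 0 :=
    Finset.sum_eq_zero fun i hi => by
      simp [Nat.descFactorial_eq_zero_iff_lt.mpr (Finset.mem_range.mp hi)]
  rw [hzero, add_zero] at h2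
  exact h2

private lemma hs_pd' (r : NNReal) (j : ℕ) :
    HasSum (fun n : ℕ => poissonPMFReal r n * (n.descFactorial j : ℝ)) ((r:ℝ)^j) := by
  have h := (hs_desc' (r:ℝ) j).mul_left (Real.exp (-(r:ℝ)))
  convert h using 2 with n
  · rfl
  · unfold poissonPMFReal; ring
  · rw [show rexp (-(r:ℝ)) * ((r:ℝ)^j * rexp (r:ℝ))
        = ((r:ℝ)^j) * (rexp (-(r:ℝ)) * rexp (r:ℝ)) from by ring, ← Real.exp_add]
    simp

private lemma hs_m1' (r : NNReal) :
    HasSum (fun n : ℕ => poissonPMFReal r n * (n:ℝ)^1) (r:ℝ) := by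
  have h := hs_pd' r 1
  convert h using 2 with n <;> simp

private lemma hs_m2' (r : NNReal) :
    HasSum (fun n : ℕ => poissonPMFReal r n * (n:ℝ)^2) ((r:ℝ)^2 + r) := by
  have h := (hs_pd' r 2).add (hs_pd' r 1)
  convert h using 2 with n
  · rw [cd2', Nat.descFactorial_one]; ring
  · simp

private lemma hs_m3' (r : NNReal) :
    HasSum (fun n : ℕ => poissonPMFReal r n * (n:ℝ)^3) ((r:ℝ)^3 + 3*(r:ℝ)^2 + r) := by
  have h := ((hs_pd' r 3).add ((hs_pd' r 2).mul_left 3)).add (hs_pd' r 1)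
  convert h using 2 with n
  · rw [cd3', cd2', Nat.descFactorial_one]; ring
  · simp

private lemma hs_m4' (r : NNReal) :
    HasSum (fun n : ℕ => poissonPMFReal r n * (n:ℝ)^4)
      ((r:ℝ)^4 + 6*(r:ℝ)^3 + 7*(r:ℝ)^2 + r) := by
  have h := (((hs_pd' r 4).add ((hs_pd' r 3).mul_left 6)).add ((hs_pd' r 2).mul_left 7)).add
    (hs_pd' r 1)
  convert h using 2 with n
  · rw [cd4', cd3', cd2', Nat.descFactorial_one]; ring
  · simp

private lemma integrable_poisson_of_nonneg' (r : NNReal) {f : ℕ → ℝ} (hf0 : ∀ n, 0 ≤ f n)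
    (hsum : Summable fun n => poissonPMFReal r n * f n) :
    Integrable f (poissonMeasure r) := by
  refine ⟨Measurable.aestronglyMeasurable (by measurability), ?_⟩
  rw [HasFiniteIntegral, lintegral_countable']
  have hmeas : ∀ n : ℕ, (poissonMeasure r) {n} = ENNReal.ofReal (poissonPMFReal r n) := by
    intro n
    rw [poissonMeasure_singleton]
    rfl
  have hterm : ∀ n : ℕ, (‖f n‖₊ : ENNReal) * (poissonMeasure r) {n}
      = ENNReal.ofReal (poissonPMFReal r n * f n) := by
    intro n
    rw [hmeas n, ENNReal.ofReal_mul poissonPMFReal_nonneg, mul_comm,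
      ← ENNReal.ofReal_coe_nnreal, coe_nnnorm, Real.norm_of_nonneg (hf0 n)]
  calc ∑' n : ℕ, (‖f n‖₊ : ENNReal) * (poissonMeasure r) {n}
      = ∑' n : ℕ, ENNReal.ofReal (poissonPMFReal r n * f n) := tsum_congr hterm
    _ = ENNReal.ofReal (∑' n, poissonPMFReal r n * f n) :=
        (ENNReal.ofReal_tsum_of_nonneg (fun n => mul_nonneg poissonPMFReal_nonneg (hf0 n))
          hsum).symm
    _ < ⊤ := ENNReal.ofReal_lt_top

private lemma integral_poisson' (r : NNReal) (f : ℕ → ℝ) (hf : Integrable f (poissonMeasure r)) :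
    ∫ n, f n ∂(poissonMeasure r) = ∑' n, poissonPMFReal r n * f n := by
  rw [integral_countable hf]
  refine tsum_congr fun n => ?_
  rw [poissonMeasure_real_singleton, smul_eq_mul]
  rfl

open MeasureTheory ProbabilityTheory

theorem poisson_sqrt_lower_bound
    {Ω : Type*} [MeasurableSpace Ω] (P : Measure Ω) [IsProbabilityMeasure P]
    (μ : NNReal) (hμ : 0 < μ)
    (U : Ω → ℕ) (hU : Measurable U)
    (hlaw : P.map U = poissonMeasure μ) :
    1 - 1 / (8 * (μ : ℝ)) - 7 / (8 * (μ : ℝ) ^ 2) - 5 / (16 * (μ : ℝ) ^ 3) ≤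
      ∫ ω, Real.sqrt ((U ω : ℝ) / (μ : ℝ)) ∂P := by
  have hx : 0 < (μ : ℝ) := by exact_mod_cast hμ
  set x : ℝ := (μ : ℝ) with hxdef
  -- the polynomial lower bound, as a function of n
  set c1 : ℝ := 35/(16*x) with hc1
  set c2 : ℝ := -35/(16*x^2) with hc2
  set c3 : ℝ := 21/(16*x^3) with hc3
  set c4 : ℝ := -5/(16*x^4) with hc4
  set Q : ℕ → ℝ := fun n => c1*(n:ℝ)^1 + c2*(n:ℝ)^2 + c3*(n:ℝ)^3 + c4*(n:ℝ)^4 with hQ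
  -- transfer to the Poisson measure
  have hmap : ∫ ω, Real.sqrt ((U ω : ℝ) / x) ∂P
      = ∫ n, Real.sqrt ((n : ℝ) / x) ∂(poissonMeasure μ) := by
    rw [← hlaw, integral_map hU.aemeasurable
      (Measurable.aestronglyMeasurable (by measurability))]
  -- integrability of monomials
  have I1 : Integrable (fun n : ℕ => (n:ℝ)^1) (poissonMeasure μ) :=
    integrable_poisson_of_nonneg' μ (fun n => by positivity) (hs_m1' μ).summable
  have I2 : Integrable (fun n : ℕ => (n:ℝ)^2) (poissonMeasure μ) :=
    integrable_poisson_of_nonneg' μ (fun n => by positivity) (hs_m2' μ).summable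
  have I3 : Integrable (fun n : ℕ => (n:ℝ)^3) (poissonMeasure μ) :=
    integrable_poisson_of_nonneg' μ (fun n => by positivity) (hs_m3' μ).summable
  have I4 : Integrable (fun n : ℕ => (n:ℝ)^4) (poissonMeasure μ) :=
    integrable_poisson_of_nonneg' μ (fun n => by positivity) (hs_m4' μ).summable
  have IQ : Integrable Q (poissonMeasure μ) := by
    rw [hQ]
    exact ((I1.const_mul c1).add (I2.const_mul c2)).add
      ((I3.const_mul c3).add (I4.const_mul c4)) |>.congr
      (Filter.Eventually.of_forall fun n => by simp only [Pi.add_apply]; ring)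
  -- integrability of the square root
  have Ig : Integrable (fun n : ℕ => Real.sqrt ((n:ℝ)/x)) (poissonMeasure μ) := by
    have IB : Integrable (fun n : ℕ => 1 + (n:ℝ)^1 * (1/x)) (poissonMeasure μ) :=
      (integrable_const 1).add (I1.mul_const (1/x))
    refine Integrable.mono IB (Measurable.aestronglyMeasurable (by measurability))
      (Filter.Eventually.of_forall fun n => ?_)
    have hy : (0:ℝ) ≤ (n:ℝ)/x := by positivity
    have h1 : Real.sqrt ((n:ℝ)/x) ≤ 1 + (n:ℝ)/x := by
      nlinarith [Real.sq_sqrt hy, Real.sqrt_nonneg ((n:ℝ)/x),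
        sq_nonneg (Real.sqrt ((n:ℝ)/x) - 1)]
    rw [Real.norm_of_nonneg (Real.sqrt_nonneg _), Real.norm_of_nonneg (by positivity)]
    calc Real.sqrt ((n:ℝ)/x) ≤ 1 + (n:ℝ)/x := h1
      _ = 1 + (n:ℝ)^1 * (1/x) := by ring
  -- pointwise comparison
  have hQle : ∀ n : ℕ, Q n ≤ Real.sqrt ((n:ℝ)/x) := by
    intro n
    have hy : (0:ℝ) ≤ (n:ℝ)/x := by positivity
    have h := sqrt_lb' hy
    refine le_trans (le_of_eq ?_) h
    rw [hQ, hc1, hc2, hc3, hc4]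
    field_simp
    ring
  have hmono : ∫ n, Q n ∂(poissonMeasure μ) ≤ ∫ n, Real.sqrt ((n:ℝ)/x) ∂(poissonMeasure μ) :=
    integral_mono IQ Ig hQle
  -- compute the integral of Q
  have hQsum : HasSum (fun n : ℕ => poissonPMFReal μ n * Q n)
      (c1*(x) + c2*(x^2+x) + (c3*(x^3+3*x^2+x) + c4*(x^4+6*x^3+7*x^2+x))) := by
    have h := (((hs_m1' μ).mul_left c1).add ((hs_m2' μ).mul_left c2)).add
      (((hs_m3' μ).mul_left c3).add ((hs_m4' μ).mul_left c4))
    convert h using 2 with n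
    · rfl
    · rw [hQ]; ring
  have hIQval : ∫ n, Q n ∂(poissonMeasure μ)
      = c1*(x) + c2*(x^2+x) + (c3*(x^3+3*x^2+x) + c4*(x^4+6*x^3+7*x^2+x)) := by
    rw [integral_poisson' μ Q IQ, hQsum.tsum_eq]
  have hval : c1*(x) + c2*(x^2+x) + (c3*(x^3+3*x^2+x) + c4*(x^4+6*x^3+7*x^2+x))
      = 1 - 1 / (8 * x) - 7 / (8 * x ^ 2) - 5 / (16 * x ^ 3) := by
    rw [hc1, hc2, hc3, hc4]
    field_simp
    ring
  rw [hmap]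
  calc 1 - 1 / (8 * x) - 7 / (8 * x ^ 2) - 5 / (16 * x ^ 3)
      = ∫ n, Q n ∂(poissonMeasure μ) := by rw [hIQval, hval]
    _ ≤ _ := hmono
end

section
/- For a sequence with a ≥ 1/2, the double sum satisfies ∑_{k=0}^{n−2} ∑_{ℓ=k}^{n−2} (ℓ + 2v²)^{-5/2} ≤ (4/3)(2v² − 1)^{-1/2} for every integer n ≥ 2 and every real v with 2v² > 1. -/
lemma rpow_neg_half_nat (x : ℝ) (hx : 0 < x) (m : ℕ) :
    x ^ (-((m : ℝ) / 2)) = (Real.sqrt x ^ m)⁻¹ := by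
  rw [Real.sqrt_eq_rpow, ← Real.rpow_natCast (x ^ (1/2 : ℝ)) m, ← Real.rpow_mul hx.le,
    ← Real.rpow_neg hx.le]
  ring_nf

lemma rp1 (a : ℝ) (ha : 0 < a) : (a ^ 2 : ℝ) ^ (-(1/2) : ℝ) = a⁻¹ := by
  have h := rpow_neg_half_nat (a ^ 2) (by positivity) 1
  norm_num at h
  rw [h, Real.sqrt_sq ha.le]
lemma rp3 (a : ℝ) (ha : 0 < a) : (a ^ 2 : ℝ) ^ (-(3/2) : ℝ) = (a ^ 3)⁻¹ := by
  have h := rpow_neg_half_nat (a ^ 2) (by positivity) 3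
  norm_num at h
  rw [h, Real.sqrt_sq ha.le]
lemma rp5 (a : ℝ) (ha : 0 < a) : (a ^ 2 : ℝ) ^ (-(5/2) : ℝ) = (a ^ 5)⁻¹ := by
  have h := rpow_neg_half_nat (a ^ 2) (by positivity) 5
  norm_num at h
  rw [h, Real.sqrt_sq ha.le]

lemma stepB (u : ℝ) (hu : 1/2 < u) :
    u ^ (-(3/2) : ℝ) ≤ 2 * ((u - 1/2) ^ (-(1/2) : ℝ) - (u + 1/2) ^ (-(1/2) : ℝ)) := by
  have h1 : (0:ℝ) < u - 1/2 := by linarith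
  have h2 : (0:ℝ) < u + 1/2 := by linarith
  have h0 : (0:ℝ) < u := by linarith
  obtain ⟨a, ha, ha2⟩ : ∃ a : ℝ, 0 < a ∧ a ^ 2 = u - 1/2 :=
    ⟨Real.sqrt _, Real.sqrt_pos.2 h1, Real.sq_sqrt h1.le⟩
  obtain ⟨b, hb, hb2⟩ : ∃ b : ℝ, 0 < b ∧ b ^ 2 = u + 1/2 :=
    ⟨Real.sqrt _, Real.sqrt_pos.2 h2, Real.sq_sqrt h2.le⟩
  obtain ⟨s, hs, hs2⟩ : ∃ s : ℝ, 0 < s ∧ s ^ 2 = u :=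
    ⟨Real.sqrt _, Real.sqrt_pos.2 h0, Real.sq_sqrt h0.le⟩
  rw [← ha2, ← hb2, ← hs2, rp1 a ha, rp1 b hb, rp3 s hs]
  have hq : a * b ≤ s ^ 2 := by nlinarith [mul_pos ha hb]
  have habpos : 0 < a + b := by linarith
  have hab2 : (a + b) ^ 2 = 2 * s ^ 2 + 2 * (a * b) := by nlinarith
  have hqpos : 0 < a * b := mul_pos ha hb
  have key : (a * b) * (a + b) ≤ 2 * s ^ 3 := by
    have h7 : (a*b)^2 * s^2 ≤ s^4 * s^2 := by
      have h7' : (a*b)^2 ≤ (s^2)^2 := by nlinarith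
      nlinarith [sq_nonneg s]
    have h8 : (a*b)^3 ≤ (s^2)^3 := by nlinarith
    have hsq : ((a * b) * (a + b)) ^ 2 ≤ (2 * s ^ 3) ^ 2 := by nlinarith [h7, h8, hab2]
    nlinarith [mul_pos (mul_pos ha hb) habpos, pow_pos hs 3, hsq]
  have hba : (b - a) * (a + b) = 1 := by nlinarith
  have hd : a⁻¹ - b⁻¹ = (b - a) / (a * b) := by field_simp
  rw [hd, mul_div_assoc', inv_eq_one_div]
  rw [div_le_div_iff₀ (by positivity) (by positivity)]
  have h5 : (a * b) * (a + b) ≤ (2 * (b - a) * s ^ 3) * (a + b) := by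
    calc (a * b) * (a + b) ≤ 2 * s ^ 3 := key
    _ = (2 * (b - a) * s ^ 3) * (a + b) := by linear_combination (-2) * s^3 * hba
  have h6 := le_of_mul_le_mul_right h5 habpos
  linarith

lemma stepA (t : ℝ) (ht : 1/2 < t) :
    t ^ (-(5/2) : ℝ) ≤ 2/3 * ((t - 1/2) ^ (-(3/2) : ℝ) - (t + 1/2) ^ (-(3/2) : ℝ)) := by
  have h1 : (0:ℝ) < t - 1/2 := by linarith
  have h2 : (0:ℝ) < t + 1/2 := by linarith
  have h0 : (0:ℝ) < t := by linarith
  obtain ⟨a, ha, ha2⟩ : ∃ a : ℝ, 0 < a ∧ a ^ 2 = t - 1/2 :=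
    ⟨Real.sqrt _, Real.sqrt_pos.2 h1, Real.sq_sqrt h1.le⟩
  obtain ⟨b, hb, hb2⟩ : ∃ b : ℝ, 0 < b ∧ b ^ 2 = t + 1/2 :=
    ⟨Real.sqrt _, Real.sqrt_pos.2 h2, Real.sq_sqrt h2.le⟩
  obtain ⟨s, hs, hs2⟩ : ∃ s : ℝ, 0 < s ∧ s ^ 2 = t :=
    ⟨Real.sqrt _, Real.sqrt_pos.2 h0, Real.sq_sqrt h0.le⟩
  rw [← ha2, ← hb2, ← hs2, rp3 a ha, rp3 b hb, rp5 s hs]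
  have hq : a * b ≤ s ^ 2 := by nlinarith [mul_pos ha hb]
  have habpos : 0 < a + b := by linarith
  have hab2 : (a + b) ^ 2 = 2 * s ^ 2 + 2 * (a * b) := by nlinarith
  have hqpos : 0 < a * b := mul_pos ha hb
  have keysq : 9 * (a*b) ^ 6 * (2 * s ^ 2 + 2 * (a*b)) ≤ 4 * (2 * s ^ 2 + a*b) ^ 2 * s ^ 10 := by
    have hP : (0:ℝ) ≤ 18*(a*b)^6 + 36*(a*b)^5*s^2 + 36*(a*b)^4*s^4 + 36*(a*b)^3*s^6
          + 36*(a*b)^2*s^8 + 32*(a*b)*s^10 + 16*s^12 := by positivity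
    have h9 : 0 ≤ (s^2 - a*b) * (18*(a*b)^6 + 36*(a*b)^5*s^2 + 36*(a*b)^4*s^4 + 36*(a*b)^3*s^6
          + 36*(a*b)^2*s^8 + 32*(a*b)*s^10 + 16*s^12) := mul_nonneg (sub_nonneg.2 hq) hP
    have hfac : 4 * (2 * s ^ 2 + a*b) ^ 2 * s ^ 10 - 9 * (a*b) ^ 6 * (2 * s ^ 2 + 2 * (a*b))
        = (s^2 - a*b) * (18*(a*b)^6 + 36*(a*b)^5*s^2 + 36*(a*b)^4*s^4 + 36*(a*b)^3*s^6
          + 36*(a*b)^2*s^8 + 32*(a*b)*s^10 + 16*s^12) := by ring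
    linarith [h9, hfac]
  have key3 : 3 * (a*b) ^ 3 * (a + b) ≤ 2 * (2 * s ^ 2 + a*b) * s ^ 5 := by
    have hL : 0 ≤ 3 * (a*b) ^ 3 * (a + b) := by positivity
    have hR : 0 < 2 * (2 * s ^ 2 + a*b) * s ^ 5 := by positivity
    have hsq : (3 * (a*b) ^ 3 * (a + b)) ^ 2 ≤ (2 * (2 * s ^ 2 + a*b) * s ^ 5) ^ 2 := by
      calc (3 * (a*b) ^ 3 * (a + b)) ^ 2 = 9 * (a*b) ^ 6 * ((a + b) ^ 2) := by ring
        _ = 9 * (a*b) ^ 6 * (2 * s ^ 2 + 2 * (a*b)) := by rw [hab2]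
        _ ≤ 4 * (2 * s ^ 2 + a*b) ^ 2 * s ^ 10 := keysq
        _ = (2 * (2 * s ^ 2 + a*b) * s ^ 5) ^ 2 := by ring
    nlinarith [hsq, hL, hR]
  have e1' : b ^ 2 - a ^ 2 = 1 := by linarith
  have e2' : a ^ 2 + b ^ 2 = 2 * s ^ 2 := by linarith
  have hba3 : (b ^ 3 - a ^ 3) * (a + b) = 2 * s ^ 2 + a * b := by
    linear_combination (a^2 + a*b + b^2) * e1' + e2'
  have hd : (a ^ 3)⁻¹ - (b ^ 3)⁻¹ = (b ^ 3 - a ^ 3) / (a ^ 3 * b ^ 3) := by field_simp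
  rw [hd, div_mul_div_comm, inv_eq_one_div]
  rw [div_le_div_iff₀ (by positivity) (by positivity)]
  have h5 : (3 * (a ^ 3 * b ^ 3)) * (a + b) ≤ (2 * (b ^ 3 - a ^ 3) * s ^ 5) * (a + b) := by
    calc (3 * (a ^ 3 * b ^ 3)) * (a + b) = 3 * (a*b) ^ 3 * (a + b) := by ring
      _ ≤ 2 * (2 * s ^ 2 + a*b) * s ^ 5 := key3
      _ = (2 * (b ^ 3 - a ^ 3) * s ^ 5) * (a + b) := by linear_combination (-2) * s^5 * hba3
  have h6 := le_of_mul_le_mul_right h5 habpos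
  linarith

lemma tele_aux (f g : ℕ → ℝ) (h : ∀ i, f i ≤ g i - g (i + 1)) :
    ∀ m k, k ≤ m + 1 → ∑ ℓ ∈ Finset.Icc k m, f ℓ ≤ g k - g (m + 1) := by
  intro m
  induction m with
  | zero =>
    intro k hk
    interval_cases k
    · simpa using h 0
    · simp
  | succ m ih =>
    intro k hk
    rcases Nat.lt_or_ge k (m + 2) with hk' | hk'
    · rw [Finset.sum_Icc_succ_top (by omega : k ≤ m + 1)]
      have := ih k (by omega)
      have := h (m + 1)
      linarith
    · have hkm : k = m + 2 := by omega
      subst hkm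
      rw [Finset.Icc_eq_empty (by omega)]
      simp

lemma tele (f g : ℕ → ℝ) (h : ∀ i, f i ≤ g i - g (i + 1)) (hg : ∀ i, 0 ≤ g i)
    (k m : ℕ) (hk : k ≤ m) : ∑ ℓ ∈ Finset.Icc k m, f ℓ ≤ g k := by
  have := tele_aux f g h m k (by omega)
  have := hg (m + 1)
  linarith

theorem double_sum_bound (n : ℕ) (hn : 2 ≤ n) (v : ℝ) (hv : 1 < 2 * v ^ 2) :
    ∑ k ∈ Finset.range (n - 1), ∑ ℓ ∈ Finset.Icc k (n - 2),
        ((ℓ : ℝ) + 2 * v ^ 2) ^ (-(5 / 2 : ℝ)) ≤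
      4 / 3 * (2 * v ^ 2 - 1) ^ (-(1 / 2 : ℝ)) := by
  set F : ℕ → ℝ := fun j => 2/3 * (((j : ℝ) + 2 * v ^ 2 - 1/2) ^ (-(3/2) : ℝ)) with hF
  set G : ℕ → ℝ := fun j => 4/3 * (((j : ℝ) + 2 * v ^ 2 - 1) ^ (-(1/2) : ℝ)) with hG
  have hstepF : ∀ i : ℕ, ((i : ℝ) + 2 * v ^ 2) ^ (-(5/2) : ℝ) ≤ F i - F (i + 1) := by
    intro i
    have ht : (1:ℝ)/2 < (i : ℝ) + 2 * v ^ 2 := by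
      have : (0:ℝ) ≤ (i : ℝ) := Nat.cast_nonneg i
      linarith
    have := stepA ((i : ℝ) + 2 * v ^ 2) ht
    simp only [hF]
    push_cast
    have e1 : ((i : ℝ) + 2 * v ^ 2) - 1/2 = (i : ℝ) + 2 * v ^ 2 - 1/2 := by ring
    have e2 : ((i : ℝ) + 2 * v ^ 2) + 1/2 = ((i : ℝ) + 1) + 2 * v ^ 2 - 1/2 := by ring
    rw [e1, e2] at this
    linarith
  have hstepG : ∀ i : ℕ, F i ≤ G i - G (i + 1) := by
    intro i
    have hu : (1:ℝ)/2 < (i : ℝ) + 2 * v ^ 2 - 1/2 := by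
      have : (0:ℝ) ≤ (i : ℝ) := Nat.cast_nonneg i
      linarith
    have := stepB ((i : ℝ) + 2 * v ^ 2 - 1/2) hu
    simp only [hF, hG]
    push_cast
    have e1 : ((i : ℝ) + 2 * v ^ 2 - 1/2) - 1/2 = (i : ℝ) + 2 * v ^ 2 - 1 := by ring
    have e2 : ((i : ℝ) + 2 * v ^ 2 - 1/2) + 1/2 = ((i : ℝ) + 1) + 2 * v ^ 2 - 1 := by ring
    rw [e1, e2] at this
    linarith
  have hFnn : ∀ i : ℕ, 0 ≤ F i := by
    intro i
    have : (0:ℝ) ≤ (i : ℝ) := Nat.cast_nonneg i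
    have hb : (0:ℝ) < (i : ℝ) + 2 * v ^ 2 - 1/2 := by linarith
    simp only [hF]
    positivity
  have hGnn : ∀ i : ℕ, 0 ≤ G i := by
    intro i
    have : (0:ℝ) ≤ (i : ℝ) := Nat.cast_nonneg i
    have hb : (0:ℝ) < (i : ℝ) + 2 * v ^ 2 - 1 := by linarith
    simp only [hG]
    positivity
  have inner : ∀ k ∈ Finset.range (n - 1),
      ∑ ℓ ∈ Finset.Icc k (n - 2), ((ℓ : ℝ) + 2 * v ^ 2) ^ (-(5/2) : ℝ) ≤ F k := by
    intro k hk
    have hk' : k ≤ n - 2 := by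
      simp only [Finset.mem_range] at hk; omega
    exact tele _ F hstepF hFnn k (n - 2) hk'
  have step1 : ∑ k ∈ Finset.range (n - 1), ∑ ℓ ∈ Finset.Icc k (n - 2),
      ((ℓ : ℝ) + 2 * v ^ 2) ^ (-(5/2) : ℝ) ≤ ∑ k ∈ Finset.range (n - 1), F k :=
    Finset.sum_le_sum inner
  have hrange : Finset.range (n - 1) = Finset.Icc 0 (n - 2) := by
    rw [show n - 1 = (n - 2) + 1 by omega, Finset.range_eq_Ico, Finset.Ico_add_one_right_eq_Icc]
  have step2 : ∑ k ∈ Finset.range (n - 1), F k ≤ G 0 := by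
    rw [hrange]
    exact tele F G hstepG hGnn 0 (n - 2) (Nat.zero_le _)
  have hG0 : G 0 = 4 / 3 * (2 * v ^ 2 - 1) ^ (-(1 / 2 : ℝ)) := by
    simp only [hG]
    norm_num
  calc ∑ k ∈ Finset.range (n - 1), ∑ ℓ ∈ Finset.Icc k (n - 2),
      ((ℓ : ℝ) + 2 * v ^ 2) ^ (-(5 / 2 : ℝ)) ≤ ∑ k ∈ Finset.range (n - 1), F k := step1
    _ ≤ G 0 := step2
    _ = _ := hG0
end
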